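/- Define, for i ∈ {1,2}, integers ξ^{(k)}(i) for k = 0, …, e−1 by the downward recursion ξ^{(e−1)}(i) = (c_•^{(e−1)}(i) − 1)·(d_•^{(e−1)}(i) − 1) and, for 0 ≤ k ≤ e−2, ξ^{(k)}(i) = d^{(k+1)}(i)·(c_•^{(k)}(i) − 1)·(d_•^{(k)}(i) − 1) + ξ^{(k+1)}(i), where d^{(k)}(i) = ∏_{l=k}^{e−1} d_•^{(l)}(i). Then ξ^{(k)}(1) = ξ^{(k)}(2) for every k = 0, …, e−1. -/

import Mathlib

/-!
Write the exponent sequences of the recursion `i` in the coordinates `(λ_{i,·}, λ_{ĩ,·})`. One step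
of the recursion is then `λ^{(k+1)}_j = M (λ^{(k)}_{j+1} - λ^{(k)}_1 + d_• λ^{(k)}_1)` for an integer
matrix `M` of determinant `d_•`, built from the leading exponent `x = λ^{(k)}_1` and `r_i`. The two
recursions start from sequences that differ by the coordinate swap, and stay related by some
`U ∈ GL₂(ℤ)`: if `x' = U x`, the rows of `M' U` are integer functionals taking integral values on
`x`, and the rows of `M` generate all such functionals, so `M' U = V M` with `V` integral and
`det V = det U`. Since `d_•` is the order of `x` in `(ℚ/ℤ)²` and `c_•` is the content of the
integral vector `d_• x`, both are `GL₂(ℤ)`-invariants; hence the two recursions for `ξ` have the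
same terms.
-/

/-- The data of a reduced irreducible quasi-ordinary prototype surface branch
`ζ = Σ_{j=1}^e x₁^{λ_{1,j}} x₂^{λ_{2,j}}` together with, for each choice `i ∈ {1,2}`
of the recursion, the derived exponent sequences `λ^{(k)}_{u,j}(i)`, the lowest-terms
representations `λ^{(k)}_{u,1}(i) = n_u^{(k)}(i) / m_u^{(k)}(i)` of the leading
exponents, and the minimal nonnegative integers `r_i^{(k)}, s_i^{(k)}` with
`m_ĩ^{(k)}(i)·s_i^{(k)} − n_ĩ^{(k)}(i)·r_i^{(k)} = 1`.

The `Bool` index `false` corresponds to the index `1` of the paper and `true` to `2`;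
for an index `i`, the other index `ĩ` is `!i`. -/
structure QOData where
  /-- the number `e ≥ 1` of characteristic terms -/
  e : ℕ
  he : 1 ≤ e
  /-- the characteristic exponents `λ_{u,j}` for `u ∈ {1,2}`, `j = 1,…,e` -/
  lam0 : Bool → ℕ → ℚ
  /-- the derived exponents `λ^{(k)}_{u,j}(i)`; the arguments are, in order, `i u k j`,
  with `k = 0,…,e−1` and `j = 1,…,e−k` -/
  lam : Bool → Bool → ℕ → ℕ → ℚ
  /-- the numerators `n_u^{(k)}(i)`; the arguments are, in order, `i u k` -/
  n : Bool → Bool → ℕ → ℤ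
  /-- the denominators `m_u^{(k)}(i) ≥ 1`; the arguments are, in order, `i u k` -/
  m : Bool → Bool → ℕ → ℕ
  /-- `r_i^{(k)}`; the arguments are, in order, `i k` -/
  r : Bool → ℕ → ℕ
  /-- `s_i^{(k)}`; the arguments are, in order, `i k` -/
  s : Bool → ℕ → ℕ
  /-- the leading exponents are positive -/
  pos : ∀ u, 0 < lam0 u 1
  /-- the exponents are nondecreasing in `j` -/
  mono : ∀ u j, 1 ≤ j → j < e → lam0 u j ≤ lam0 u (j + 1)
  /-- each characteristic pair is essential: it does not lie in the subgroup of `ℚ²`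
  generated by `ℤ²` together with the earlier pairs -/
  essential : ∀ j, 1 ≤ j → j ≤ e →
    (lam0 false j, lam0 true j) ∉
      AddSubgroup.closure
        ((Set.range fun p : ℤ × ℤ => ((p.1 : ℚ), (p.2 : ℚ))) ∪
          {q : ℚ × ℚ | ∃ l, 1 ≤ l ∧ l < j ∧ q = (lam0 false l, lam0 true l)})
  /-- `λ^{(0)}_{u,j}(i) = λ_{u,j}` -/
  base : ∀ i u j, lam i u 0 j = lam0 u j
  /-- the denominators are at least 1 -/
  m_pos : ∀ i u k, k ≤ e - 1 → 1 ≤ m i u k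
  /-- the leading exponents are written in lowest terms -/
  cop : ∀ i u k, k ≤ e - 1 → Int.gcd (n i u k) (m i u k : ℤ) = 1
  /-- `λ^{(k)}_{u,1}(i) = n_u^{(k)}(i) / m_u^{(k)}(i)` -/
  lead : ∀ i u k, k ≤ e - 1 → lam i u k 1 = (n i u k : ℚ) / (m i u k : ℚ)
  /-- `m_ĩ^{(k)}(i)·s_i^{(k)} − n_ĩ^{(k)}(i)·r_i^{(k)} = 1` -/
  rs_det : ∀ i k, k ≤ e - 1 →
    (m i (!i) k : ℤ) * (s i k : ℤ) - n i (!i) k * (r i k : ℤ) = 1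
  /-- `r_i^{(k)}` and `s_i^{(k)}` are the smallest nonnegative integers satisfying
  the determinant condition -/
  rs_min : ∀ i k, k ≤ e - 1 → ∀ r' s' : ℕ,
    (m i (!i) k : ℤ) * (s' : ℤ) - n i (!i) k * (r' : ℤ) = 1 → r i k ≤ r' ∧ s i k ≤ s'
  /-- the recursion for `λ^{(k+1)}_{ĩ,j}(i)`, where `d_•^{(k)}(i) = lcm(m₁^{(k)}(i), m₂^{(k)}(i))` -/
  rec_other : ∀ i k j, k + 1 ≤ e - 1 → 1 ≤ j → j ≤ e - (k + 1) →
    lam i (!i) (k + 1) j =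
      (m i (!i) k : ℚ) *
        (lam i (!i) k (j + 1) - lam i (!i) k 1 +
          (Nat.lcm (m i false k) (m i true k) : ℚ) * lam i (!i) k 1)
  /-- the recursion for `λ^{(k+1)}_{i,j}(i)`, where
  `b_i^{(k)} = d_•^{(k)}(i) / m_ĩ^{(k)}(i)` -/
  rec_self : ∀ i k j, k + 1 ≤ e - 1 → 1 ≤ j → j ≤ e - (k + 1) →
    lam i i (k + 1) j =
      ((Nat.lcm (m i false k) (m i true k) / m i (!i) k : ℕ) : ℚ) *
        (lam i i k (j + 1) - lam i i k 1 +
          (Nat.lcm (m i false k) (m i true k) : ℚ) * lam i i k 1) +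
      ((Nat.lcm (m i false k) (m i true k) / m i (!i) k : ℕ) : ℚ) * (r i k : ℚ) *
        lam i i k 1 * lam i (!i) (k + 1) j

namespace QOData

variable (D : QOData)

/-- `d_•^{(k)}(i) = lcm(m₁^{(k)}(i), m₂^{(k)}(i))` -/
def dd (i : Bool) (k : ℕ) : ℕ := Nat.lcm (D.m i false k) (D.m i true k)

/-- `b_i^{(k)} = d_•^{(k)}(i) / m_ĩ^{(k)}(i)` -/
def b (i : Bool) (k : ℕ) : ℕ := D.dd i k / D.m i (!i) k

/-- `c_•^{(k)}(i) = gcd(n₁^{(k)}(i), n₂^{(k)}(i))` -/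
def c (i : Bool) (k : ℕ) : ℕ := Int.gcd (D.n i false k) (D.n i true k)

/-- `d^{(k)}(i) = ∏_{l=k}^{e−1} d_•^{(l)}(i)`, the degree of the `k`-th derived surface -/
def dTot (i : Bool) (k : ℕ) : ℕ := ∏ l ∈ Finset.Ico k D.e, D.dd i l

end QOData

theorem Nat.coprime_lcm_div_lcm_div {a b : ℕ} (ha : 0 < a) (hb : 0 < b) :
    Nat.Coprime (Nat.lcm a b / a) (Nat.lcm a b / b) := by
  have hg : 0 < Nat.gcd a b := Nat.gcd_pos_of_pos_left _ ha
  have hA : Nat.lcm a b / a = b / Nat.gcd a b := by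
    rw [Nat.lcm, Nat.mul_div_assoc _ (Nat.gcd_dvd_right a b), Nat.mul_div_cancel_left _ ha]
  have hB : Nat.lcm a b / b = a / Nat.gcd a b := by
    rw [Nat.lcm, Nat.mul_comm, Nat.mul_div_assoc _ (Nat.gcd_dvd_left a b),
      Nat.mul_div_cancel_left _ hb]
  rw [hA, hB]
  exact (Nat.coprime_div_gcd_div_gcd hg).symm

theorem Nat.lcm_div_left_dvd {a : ℕ} (b : ℕ) (ha : 0 < a) : Nat.lcm a b / a ∣ b :=
  (Nat.div_dvd_iff_dvd_mul (Nat.dvd_lcm_left a b) ha).2 (Nat.lcm_dvd_mul a b)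

theorem Nat.lcm_div_right_dvd (a : ℕ) {b : ℕ} (hb : 0 < b) : Nat.lcm a b / b ∣ a := by
  rw [Nat.lcm_comm]
  exact Nat.lcm_div_left_dvd a hb

open Matrix

-- `vecDen x` is the order of `x` in `(ℚ/ℤ)²`, and `vecNum x = vecDen x • x` (`vecDen_smul`).
def vecDen (x : Fin 2 → ℚ) : ℕ := Nat.lcm (x 0).den (x 1).den

def vecNum (x : Fin 2 → ℚ) : Fin 2 → ℤ := fun u => (x u).num * (vecDen x / (x u).den : ℕ)

theorem vecDen_pos (x : Fin 2 → ℚ) : 0 < vecDen x :=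
  Nat.lcm_pos (x 0).den_pos (x 1).den_pos

theorem den_dvd_vecDen (x : Fin 2 → ℚ) (u : Fin 2) : (x u).den ∣ vecDen x := by
  fin_cases u
  exacts [Nat.dvd_lcm_left _ _, Nat.dvd_lcm_right _ _]

theorem vecDen_smul (x : Fin 2 → ℚ) : (vecDen x : ℚ) • x = fun u => (vecNum x u : ℚ) := by
  funext u
  have hden : ((x u).den : ℚ) ≠ 0 := by positivity
  rw [vecNum, Pi.smul_apply, smul_eq_mul, Int.cast_mul, Int.cast_natCast,
    Nat.cast_div (den_dvd_vecDen x u) hden, ← Rat.mul_den_eq_num]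
  field_simp

theorem vecDen_dvd_of_smul_eq {x : Fin 2 → ℚ} {N : ℕ} {z : Fin 2 → ℤ}
    (h : (N : ℚ) • x = fun u => (z u : ℚ)) : vecDen x ∣ N := by
  rcases N.eq_zero_or_pos with rfl | hN
  · exact dvd_zero _
  have hden : ∀ u, (x u).den ∣ N := fun u => by
    have hu : x u = Rat.divInt (z u) N := by
      rw [Rat.divInt_eq_div, ← congrFun h u, Pi.smul_apply, smul_eq_mul]
      push_cast
      field_simp
    exact_mod_cast hu ▸ Rat.den_dvd (z u) N
  exact Nat.lcm_dvd (hden 0) (hden 1)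

theorem intCast_mulVec_intCast (U : Matrix (Fin 2) (Fin 2) ℤ) (z : Fin 2 → ℤ) :
    U.map (↑) *ᵥ (fun u => (z u : ℚ)) = fun u => ((U *ᵥ z) u : ℚ) := by
  funext u
  exact ((Int.castRingHom ℚ).map_mulVec U z u).symm

theorem vecDen_mulVec_dvd (U : Matrix (Fin 2) (Fin 2) ℤ) (x : Fin 2 → ℚ) :
    vecDen (U.map (↑) *ᵥ x) ∣ vecDen x := by
  apply vecDen_dvd_of_smul_eq (z := U *ᵥ vecNum x)
  rw [← mulVec_smul, vecDen_smul, intCast_mulVec_intCast]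

theorem mulVec_inv_mulVec {U : Matrix (Fin 2) (Fin 2) ℤ} (hU : IsUnit U.det) (x : Fin 2 → ℚ) :
    U⁻¹.map (↑) *ᵥ (U.map (↑) *ᵥ x) = x := by
  rw [mulVec_mulVec, ← map_mul_intCast, nonsing_inv_mul U hU]
  simp

theorem vecDen_mulVec {U : Matrix (Fin 2) (Fin 2) ℤ} (hU : IsUnit U.det) (x : Fin 2 → ℚ) :
    vecDen (U.map (↑) *ᵥ x) = vecDen x := by
  refine Nat.dvd_antisymm (vecDen_mulVec_dvd U x) ?_
  conv_lhs => rw [← mulVec_inv_mulVec hU x]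
  exact vecDen_mulVec_dvd _ _

theorem vecNum_mulVec {U : Matrix (Fin 2) (Fin 2) ℤ} (hU : IsUnit U.det) (x : Fin 2 → ℚ) :
    vecNum (U.map (↑) *ᵥ x) = U *ᵥ vecNum x := by
  have h := vecDen_smul (U.map (↑) *ᵥ x)
  rw [vecDen_mulVec hU, ← mulVec_smul, vecDen_smul, intCast_mulVec_intCast] at h
  funext u
  exact_mod_cast (congrFun h u).symm

theorem gcd_dvd_gcd_mulVec (U : Matrix (Fin 2) (Fin 2) ℤ) (y : Fin 2 → ℤ) :
    Int.gcd (y 0) (y 1) ∣ Int.gcd ((U *ᵥ y) 0) ((U *ᵥ y) 1) := by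
  have hy : ∀ u, (Int.gcd (y 0) (y 1) : ℤ) ∣ y u := fun u => by
    fin_cases u
    exacts [Int.gcd_dvd_left _ _, Int.gcd_dvd_right _ _]
  have hUy : ∀ u, (Int.gcd (y 0) (y 1) : ℤ) ∣ (U *ᵥ y) u := fun u => by
    simp only [mulVec, dotProduct]
    exact Finset.dvd_sum fun v _ => (hy v).mul_left (U u v)
  exact Int.dvd_gcd (hUy 0) (hUy 1)

theorem gcd_mulVec {U : Matrix (Fin 2) (Fin 2) ℤ} (hU : IsUnit U.det) (y : Fin 2 → ℤ) :
    Int.gcd ((U *ᵥ y) 0) ((U *ᵥ y) 1) = Int.gcd (y 0) (y 1) := by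
  refine Nat.dvd_antisymm ?_ (gcd_dvd_gcd_mulVec U y)
  have h := gcd_dvd_gcd_mulVec U⁻¹ (U *ᵥ y)
  rwa [mulVec_mulVec, nonsing_inv_mul U hU, one_mulVec] at h

theorem coprime_vecDen_div_den (x : Fin 2 → ℚ) {u v : Fin 2} (huv : u ≠ v) :
    Nat.Coprime (vecDen x / (x u).den) ((x v).num.natAbs * (vecDen x / (x v).den)) := by
  have hAB := Nat.coprime_lcm_div_lcm_div (x 0).den_pos (x 1).den_pos
  fin_cases u <;> fin_cases v <;> simp only [ne_eq, not_true_eq_false] at huv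
  · exact (Nat.Coprime.coprime_dvd_left (Nat.lcm_div_left_dvd _ (x 0).den_pos)
      (x 1).reduced.symm).mul_right hAB
  · exact (Nat.Coprime.coprime_dvd_left (Nat.lcm_div_right_dvd _ (x 1).den_pos)
      (x 0).reduced.symm).mul_right hAB.symm

theorem gcd_vecNum (x : Fin 2 → ℚ) :
    Int.gcd (vecNum x 0) (vecNum x 1) = Int.gcd (x 0).num (x 1).num := by
  simp only [vecNum, Int.gcd_eq_natAbs, Int.natAbs_mul, Int.natAbs_natCast]
  rw [Nat.Coprime.gcd_mul_right_cancel_right _ (coprime_vecDen_div_den x one_ne_zero),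
    Nat.Coprime.gcd_mul_right_cancel _
      (Nat.Coprime.coprime_mul_right_right (coprime_vecDen_div_den x zero_ne_one))]

theorem gcd_num_mulVec {U : Matrix (Fin 2) (Fin 2) ℤ} (hU : IsUnit U.det) (x : Fin 2 → ℚ) :
    Int.gcd ((U.map (↑) *ᵥ x) 0).num ((U.map (↑) *ᵥ x) 1).num = Int.gcd (x 0).num (x 1).num := by
  rw [← gcd_vecNum, ← gcd_vecNum, vecNum_mulVec hU, gcd_mulVec hU]

/-- In the coordinates `(self, other)`, with `x` the leading exponent, `d = vecDen x`,
`b = d / m_other` and `r` as in the recursion, the step `λ^{(k)} ↦ λ^{(k+1)}` multiplies the shifted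
exponent by this matrix; its upper right entry is `b r x_self m_other = r n_self (d / m_self)`. -/
def levelMatrix (x : Fin 2 → ℚ) (r : ℤ) : Matrix (Fin 2) (Fin 2) ℤ :=
  !![(vecDen x / (x 1).den : ℕ), r * (x 0).num * (vecDen x / (x 0).den : ℕ); 0, (x 1).den]

theorem vecDen_div_mul_den (x : Fin 2 → ℚ) (u : Fin 2) :
    ((vecDen x / (x u).den : ℕ) : ℤ) * (x u).den = vecDen x := by
  exact_mod_cast Nat.div_mul_cancel (den_dvd_vecDen x u)

theorem det_levelMatrix (x : Fin 2 → ℚ) (r : ℤ) : (levelMatrix x r).det = vecDen x := by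
  rw [levelMatrix, det_fin_two_of, mul_zero, sub_zero, vecDen_div_mul_den]

theorem levelMatrix_mulVec_vecNum {x : Fin 2 → ℚ} {r s : ℤ}
    (hrs : (x 1).den * s - (x 1).num * r = 1) :
    levelMatrix x r *ᵥ vecNum x =
      (vecDen x : ℤ) • ![s * (x 0).num * (vecDen x / (x 0).den : ℕ), (x 1).num] := by
  have hB := vecDen_div_mul_den x 1
  funext u
  fin_cases u <;>
    simp only [mulVec, dotProduct, levelMatrix, vecNum, Fin.sum_univ_two, of_apply, cons_val',
      cons_val_fin_one, cons_val_zero, cons_val_one, Fin.zero_eta, Fin.mk_one, Fin.isValue,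
      Pi.smul_apply, smul_eq_mul]
  · linear_combination (-(x 0).num * (vecDen x / (x 0).den : ℕ) * (vecDen x / (x 1).den : ℕ)) * hrs
      + (x 0).num * (vecDen x / (x 0).den : ℕ) * s * hB
  · linear_combination (x 1).num * hB

theorem isCoprime_den_num (q : ℚ) : IsCoprime (q.den : ℤ) q.num := by
  rw [Int.isCoprime_iff_gcd_eq_one, Int.gcd_comm]
  exact q.reduced

/-- Since `vecNum x = vecDen x • x`, the hypothesis on `ρ` says `ρ ⬝ᵥ x ∈ ℤ`: the rows of the level
matrix generate the lattice of integer functionals that are integral on `x`. -/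
theorem exists_vecMul_levelMatrix {x : Fin 2 → ℚ} {r s : ℤ}
    (hrs : (x 1).den * s - (x 1).num * r = 1) {ρ : Fin 2 → ℤ}
    (hρ : (vecDen x : ℤ) ∣ ρ ⬝ᵥ vecNum x) : ∃ α, α ᵥ* levelMatrix x r = ρ := by
  set A : ℤ := ((vecDen x / (x 0).den : ℕ) : ℤ)
  set B : ℤ := ((vecDen x / (x 1).den : ℕ) : ℤ)
  have hBm : B * (x 1).den = vecDen x := vecDen_div_mul_den x 1
  have hB0 : B ≠ 0 := left_ne_zero_of_mul (b := ((x 1).den : ℤ)) <| by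
    rw [hBm]
    exact_mod_cast (vecDen_pos x).ne'
  obtain ⟨z, hz⟩ := hρ
  have hz' : ρ 0 * ((x 0).num * A) + ρ 1 * (x 1).num * B = B * ((x 1).den * z) := by
    simp only [dotProduct, Fin.sum_univ_two, vecNum] at hz
    linear_combination hz - z * hBm
  have hcop : IsCoprime B ((x 0).num * A) := by
    rw [Int.isCoprime_iff_gcd_eq_one, Int.gcd_eq_natAbs, Int.natAbs_mul]
    simp only [B, A, Int.natAbs_natCast]
    exact coprime_vecDen_div_den x one_ne_zero
  obtain ⟨α₀, hα₀⟩ : B ∣ ρ 0 :=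
    hcop.dvd_of_dvd_mul_right ⟨(x 1).den * z - ρ 1 * (x 1).num, by linear_combination hz'⟩
  have h₁ : α₀ * ((x 0).num * A) + ρ 1 * (x 1).num = (x 1).den * z := by
    apply mul_left_cancel₀ hB0
    linear_combination hz' - (x 0).num * A * hα₀
  obtain ⟨α₁, hα₁⟩ : ((x 1).den : ℤ) ∣ ρ 1 - α₀ * (r * (x 0).num * A) := by
    refine (isCoprime_den_num (x 1)).dvd_of_dvd_mul_right ⟨z - α₀ * s * (x 0).num * A, ?_⟩
    linear_combination h₁ + α₀ * (x 0).num * A * hrs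
  refine ⟨![α₀, α₁], funext fun u => ?_⟩
  fin_cases u <;>
    simp only [vecMul, dotProduct, levelMatrix, Fin.sum_univ_two, of_apply, cons_val',
      cons_val_fin_one, cons_val_zero, cons_val_one, Fin.zero_eta, Fin.mk_one, Fin.isValue]
  · linear_combination -hα₀
  · linear_combination -hα₁

theorem exists_mul_levelMatrix_eq {U : Matrix (Fin 2) (Fin 2) ℤ} (hU : IsUnit U.det)
    {x : Fin 2 → ℚ} {r s r' s' : ℤ} (hrs : (x 1).den * s - (x 1).num * r = 1)
    (hrs' : ((U.map (↑) *ᵥ x) 1).den * s' - ((U.map (↑) *ᵥ x) 1).num * r' = 1) :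
    ∃ V : Matrix (Fin 2) (Fin 2) ℤ, IsUnit V.det ∧
      V * levelMatrix x r = levelMatrix (U.map (↑) *ᵥ x) r' * U := by
  set P := levelMatrix (U.map (↑) *ᵥ x) r' * U
  have hrows : ∀ u, ∃ α, α ᵥ* levelMatrix x r = P u := fun u => by
    apply exists_vecMul_levelMatrix hrs
    have hPu := congrFun (levelMatrix_mulVec_vecNum hrs') u
    rw [vecNum_mulVec hU, vecDen_mulVec hU, mulVec_mulVec] at hPu
    exact ⟨_, hPu⟩
  choose α hα using hrows
  have hVP : of α * levelMatrix x r = P := funext fun u => by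
    rw [mul_apply_eq_vecMul]
    exact hα u
  refine ⟨of α, ?_, hVP⟩
  have hdet := congrArg det hVP
  rw [det_mul, det_mul, det_levelMatrix, det_levelMatrix, vecDen_mulVec hU, mul_comm] at hdet
  rwa [mul_left_cancel₀ (by exact_mod_cast (vecDen_pos x).ne') hdet]

namespace QOData

variable (D : QOData)

-- Coordinates ordered `(self, other)`, so that both recursions take the same form.
def vec (i : Bool) (k j : ℕ) : Fin 2 → ℚ := ![D.lam i i k j, D.lam i (!i) k j]

def BranchesEquiv (k : ℕ) : Prop :=
  ∃ U : Matrix (Fin 2) (Fin 2) ℤ, IsUnit U.det ∧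
    ∀ j, 1 ≤ j → j ≤ D.e - k → D.vec true k j = U.map (↑) *ᵥ D.vec false k j

variable {D} {i : Bool} {k : ℕ}

theorem num_lam {u : Bool} (hk : k ≤ D.e - 1) : (D.lam i u k 1).num = D.n i u k := by
  have h := Rat.num_div_eq_of_coprime (a := D.n i u k) (b := D.m i u k)
    (by exact_mod_cast D.m_pos i u k hk) (D.cop i u k hk)
  rwa [Int.cast_natCast, ← D.lead i u k hk] at h

theorem den_lam {u : Bool} (hk : k ≤ D.e - 1) : (D.lam i u k 1).den = D.m i u k := by
  have h := Rat.den_div_eq_of_coprime (a := D.n i u k) (b := D.m i u k)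
    (by exact_mod_cast D.m_pos i u k hk) (D.cop i u k hk)
  rw [Int.cast_natCast, ← D.lead i u k hk] at h
  exact_mod_cast h

theorem dd_eq_vecDen (hk : k ≤ D.e - 1) : D.dd i k = vecDen (D.vec i k 1) := by
  cases i <;> simp [dd, vecDen, vec, den_lam hk, Nat.lcm_comm]

theorem c_eq_gcd_num (hk : k ≤ D.e - 1) :
    D.c i k = Int.gcd (D.vec i k 1 0).num (D.vec i k 1 1).num := by
  cases i <;> simp [c, vec, num_lam hk, Int.gcd_comm]

theorem bezout (hk : k ≤ D.e - 1) :
    ((D.vec i k 1 1).den : ℤ) * D.s i k - (D.vec i k 1 1).num * D.r i k = 1 := by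
  simpa [vec, num_lam hk, den_lam hk] using D.rs_det i k hk

theorem m_ne_zero {u : Bool} (hk : k ≤ D.e - 1) : (D.m i u k : ℚ) ≠ 0 := by
  exact_mod_cast Nat.one_le_iff_ne_zero.mp (D.m_pos i u k hk)

theorem m_dvd_dd (u : Bool) : D.m i u k ∣ D.dd i k := by
  cases u
  exacts [Nat.dvd_lcm_left _ _, Nat.dvd_lcm_right _ _]

theorem levelMatrix_vec (hk : k ≤ D.e - 1) (r : ℤ) :
    levelMatrix (D.vec i k 1) r =
      !![(D.b i k : ℤ), r * D.n i i k * (D.dd i k / D.m i i k : ℕ); 0, D.m i (!i) k] := by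
  rw [levelMatrix, ← dd_eq_vecDen hk]
  simp only [vec, cons_val_zero, cons_val_one, den_lam hk, num_lam hk, b]

theorem b_mul_lam_mul_m (hk : k ≤ D.e - 1) :
    (D.b i k : ℚ) * D.lam i i k 1 * D.m i (!i) k = D.n i i k * (D.dd i k / D.m i i k : ℕ) := by
  rw [D.lead i i k hk, b, Nat.cast_div (m_dvd_dd _) (m_ne_zero hk),
    Nat.cast_div (m_dvd_dd _) (m_ne_zero hk)]
  field_simp [m_ne_zero (i := i) (u := !i) hk]

theorem vec_succ {j : ℕ} (hk : k + 1 ≤ D.e - 1) (hj₁ : 1 ≤ j) (hj₂ : j ≤ D.e - (k + 1)) :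
    D.vec i (k + 1) j = (levelMatrix (D.vec i k 1) (D.r i k)).map (↑) *ᵥ
      (D.vec i k (j + 1) - D.vec i k 1 + (D.dd i k : ℚ) • D.vec i k 1) := by
  have hk' : k ≤ D.e - 1 := by omega
  have hother : D.lam i (!i) (k + 1) j = (D.m i (!i) k : ℚ) *
      (D.lam i (!i) k (j + 1) - D.lam i (!i) k 1 + (D.dd i k : ℚ) * D.lam i (!i) k 1) :=
    D.rec_other i k j hk hj₁ hj₂
  have hself : D.lam i i (k + 1) j = (D.b i k : ℚ) *
      (D.lam i i k (j + 1) - D.lam i i k 1 + (D.dd i k : ℚ) * D.lam i i k 1) +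
      (D.b i k : ℚ) * (D.r i k : ℚ) * D.lam i i k 1 * D.lam i (!i) (k + 1) j :=
    D.rec_self i k j hk hj₁ hj₂
  rw [levelMatrix_vec hk']
  funext u
  fin_cases u <;>
    simp only [vec, mulVec, dotProduct, Fin.sum_univ_two, of_apply, cons_val',
      cons_val_fin_one, cons_val_zero, cons_val_one, Fin.zero_eta, Fin.mk_one, Fin.isValue,
      Pi.add_apply, Pi.sub_apply, Pi.smul_apply, smul_eq_mul, map_apply, Int.cast_mul,
      Int.cast_zero, Int.cast_natCast]
  · rw [hself, hother]
    linear_combination (D.r i k * (D.lam i (!i) k (j + 1) - D.lam i (!i) k 1 +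
      D.dd i k * D.lam i (!i) k 1)) * b_mul_lam_mul_m hk'
  · rw [hother]
    ring

theorem branchesEquiv_zero : D.BranchesEquiv 0 := by
  refine ⟨!![0, 1; 1, 0], by simp [det_fin_two_of], fun j _ _ => ?_⟩
  funext u
  fin_cases u <;> simp [vec, D.base, mulVec, dotProduct, Fin.sum_univ_two]

theorem BranchesEquiv.succ (hk : k + 1 ≤ D.e - 1) (h : D.BranchesEquiv k) :
    D.BranchesEquiv (k + 1) := by
  obtain ⟨U, hU, hUx⟩ := h
  have hk' : k ≤ D.e - 1 := by omega
  have hx : D.vec true k 1 = U.map (↑) *ᵥ D.vec false k 1 := hUx 1 le_rfl (by omega)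
  have hdd : D.dd true k = D.dd false k := by
    rw [dd_eq_vecDen hk', dd_eq_vecDen hk', hx, vecDen_mulVec hU]
  obtain ⟨V, hV, hVU⟩ := exists_mul_levelMatrix_eq hU (bezout hk') (hx ▸ bezout hk')
  refine ⟨V, hV, fun j hj₁ hj₂ => ?_⟩
  rw [vec_succ hk hj₁ hj₂, vec_succ hk hj₁ hj₂, hUx (j + 1) (by omega) (by omega), hx, hdd,
    ← mulVec_sub, ← mulVec_smul, ← mulVec_add, mulVec_mulVec, ← map_mul_intCast, ← hVU,
    map_mul_intCast, ← mulVec_mulVec]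

theorem BranchesEquiv.dd_eq (hk : k ≤ D.e - 1) (h : D.BranchesEquiv k) :
    D.dd false k = D.dd true k := by
  obtain ⟨U, hU, hUx⟩ := h
  rw [dd_eq_vecDen hk, dd_eq_vecDen hk, hUx 1 le_rfl (by have := D.he; omega), vecDen_mulVec hU]

theorem BranchesEquiv.c_eq (hk : k ≤ D.e - 1) (h : D.BranchesEquiv k) :
    D.c false k = D.c true k := by
  obtain ⟨U, hU, hUx⟩ := h
  rw [c_eq_gcd_num hk, c_eq_gcd_num hk, hUx 1 le_rfl (by have := D.he; omega),
    gcd_num_mulVec hU]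

theorem branchesEquiv (hk : k ≤ D.e - 1) : D.BranchesEquiv k := by
  induction k with
  | zero => exact branchesEquiv_zero
  | succ k ih => exact (ih (by omega)).succ hk

theorem dTot_eq (k : ℕ) : D.dTot false k = D.dTot true k :=
  Finset.prod_congr rfl fun l hl => by
    have hl : l ≤ D.e - 1 := by simp only [Finset.mem_Ico] at hl; omega
    exact (branchesEquiv hl).dd_eq hl

end QOData

/-- If `ξ^{(k)}(i)` is defined by the downward recursion
`ξ^{(e−1)}(i) = (c_•^{(e−1)}(i) − 1)·(d_•^{(e−1)}(i) − 1)` and, for `0 ≤ k ≤ e−2`,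
`ξ^{(k)}(i) = d^{(k+1)}(i)·(c_•^{(k)}(i) − 1)·(d_•^{(k)}(i) − 1) + ξ^{(k+1)}(i)`,
then `ξ^{(k)}(1) = ξ^{(k)}(2)` for every `k = 0,…,e−1`. -/
theorem xi_eq (D : QOData) (ξ : Bool → ℕ → ℤ)
    (hbase : ∀ i, ξ i (D.e - 1) =
      ((D.c i (D.e - 1) : ℤ) - 1) * ((D.dd i (D.e - 1) : ℤ) - 1))
    (hrec : ∀ i k, k + 2 ≤ D.e →
      ξ i k = (D.dTot i (k + 1) : ℤ) * ((D.c i k : ℤ) - 1) * ((D.dd i k : ℤ) - 1) +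
        ξ i (k + 1)) :
    ∀ k, k ≤ D.e - 1 → ξ false k = ξ true k := by
  intro k hk
  induction hk using Nat.decreasingInduction with
  | self =>
    have h := QOData.branchesEquiv (D := D) le_rfl
    rw [hbase false, hbase true, h.c_eq le_rfl, h.dd_eq le_rfl]
  | of_succ k hk ih =>
    have h := QOData.branchesEquiv (D := D) hk.le
    rw [hrec false k (by omega), hrec true k (by omega), h.c_eq hk.le, h.dd_eq hk.le,
      QOData.dTot_eq, ih]
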